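/- Fix p, q ∈ ℂ. For functions V, g : ℤ → ℝ, integers k ≥ 0 and x ∈ ℤ, define ψ(k,x) := Σ_{ε ∈ {−1,0,1}^k} (∏_{r=1}^k w(ε_r)) · exp(−i Σ_{r=0}^{k−1} V(x + ε_1 + ⋯ + ε_r)) · g(x + ε_1 + ⋯ + ε_k), where w(1) = w(−1) = p and w(0) = q. Then ψ satisfies the difference equation (1/i)(ψ(k+1,x) − ψ(k,x)) = (1/2) e^{−iV(x)} (ψ(k,x+1) − 2ψ(k,x) + ψ(k,x−1)) + (1/i)(e^{−iV(x)} − 1) ψ(k,x) for every choice of V, g and all k ≥ 0, x ∈ ℤ, if and only if p = i/2 and q = 1 − i. Moreover, when p = i/2 and q = 1 − i, ψ is the unique function of (k,x) satisfying this difference equation together with the initial condition ψ(0,x) = g(x) for all x ∈ ℤ. -/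

import Mathlib

/-!
Splitting off the first step of a path gives the recursion
`ψ(k+1,x) = e^{-iV(x)} (p ψ(k,x+1) + q ψ(k,x) + p ψ(k,x-1))`, while the difference equation,
solved for `φ(k+1,x)`, is the same recursion with `p = i/2` and `q = 1 - i`. Comparing the two at
`k = 0` with `g` a point mass at `1` or at `0` forces these values, and uniqueness follows by
induction on `k`.
-/

open Complex

/-- The complex weight of a single step: `p` for steps `±1`, `q` for a step `0`. -/
noncomputable def stepw (p q : ℂ) (e : ℤ) : ℂ :=
  if e = 1 ∨ e = -1 then p else if e = 0 then q else 0

/-- Partial sum `ε_1 + ⋯ + ε_r` of the first `r` steps (`psum ε 0 = 0`). -/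
def psum {k : ℕ} (ε : Fin k → ℤ) (r : ℕ) : ℤ :=
  ∑ s ∈ Finset.range r, if h : s < k then ε ⟨s, h⟩ else 0

/-- The discrete complex path integral
`ψ(k,x) = Σ_{ε ∈ {−1,0,1}^k} (∏ w(ε_r)) · exp(−i Σ_{r=0}^{k−1} V(x+ε_1+⋯+ε_r)) · g(x+ε_1+⋯+ε_k)`. -/
noncomputable def psi (p q : ℂ) (V g : ℤ → ℝ) (k : ℕ) (x : ℤ) : ℂ :=
  ∑ ε ∈ Fintype.piFinset (fun _ : Fin k => ({-1, 0, 1} : Finset ℤ)),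
    (∏ r : Fin k, stepw p q (ε r)) *
      Complex.exp (-Complex.I * ∑ r ∈ Finset.range k, ((V (x + psum ε r) : ℝ) : ℂ)) *
      ((g (x + psum ε k) : ℝ) : ℂ)

/-- The complex difference equation corresponding to the Schrödinger equation. -/
def DiffEq (V : ℤ → ℝ) (φ : ℕ → ℤ → ℂ) : Prop :=
  ∀ (k : ℕ) (x : ℤ),
    (1 / Complex.I) * (φ (k + 1) x - φ k x) =
      (1 / 2) * Complex.exp (-Complex.I * ((V x : ℝ) : ℂ)) *
          (φ k (x + 1) - 2 * φ k x + φ k (x - 1)) +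
        (1 / Complex.I) * (Complex.exp (-Complex.I * ((V x : ℝ) : ℂ)) - 1) * φ k x

@[simp] lemma stepw_one (p q : ℂ) : stepw p q 1 = p := by simp [stepw]
@[simp] lemma stepw_neg_one (p q : ℂ) : stepw p q (-1) = p := by simp [stepw]
@[simp] lemma stepw_zero (p q : ℂ) : stepw p q 0 = q := by simp [stepw]

@[simp] lemma psum_zero {k : ℕ} (ε : Fin k → ℤ) : psum ε 0 = 0 := rfl

lemma psum_cons {k : ℕ} (e : ℤ) (δ : Fin k → ℤ) (r : ℕ) :
    psum (Fin.cons e δ) (r + 1) = e + psum δ r := by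
  rw [psum, Finset.sum_range_succ', dif_pos k.succ_pos, add_comm]
  simp only [Nat.add_lt_add_iff_right]
  rfl

lemma Finset.sum_piFinset_const_succ {α M : Type*} [AddCommMonoid M] {k : ℕ} (S : Finset α)
    (f : (Fin (k + 1) → α) → M) :
    ∑ ε ∈ Fintype.piFinset (fun _ : Fin (k + 1) => S), f ε
      = ∑ e ∈ S, ∑ δ ∈ Fintype.piFinset (fun _ : Fin k => S), f (Fin.cons e δ) := by
  have h := Finset.filter_piFinset_eq_map_consEquiv (fun _ : Fin (k + 1) => S) (fun _ => True)
  simp only [Finset.filter_true] at h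
  rw [h, Finset.sum_map, Finset.sum_product]
  rfl

lemma psi_zero (p q : ℂ) (V g : ℤ → ℝ) (x : ℤ) : psi p q V g 0 x = g x := by
  simp [psi]

lemma psi_succ_eq_sum (p q : ℂ) (V g : ℤ → ℝ) (k : ℕ) (x : ℤ) :
    psi p q V g (k + 1) x = ∑ e ∈ ({-1, 0, 1} : Finset ℤ),
      stepw p q e * Complex.exp (-Complex.I * V x) * psi p q V g k (x + e) := by
  rw [psi, Finset.sum_piFinset_const_succ]
  refine Finset.sum_congr rfl fun e _ => ?_
  rw [psi, Finset.mul_sum]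
  refine Finset.sum_congr rfl fun δ _ => ?_
  have hV : ∑ r ∈ Finset.range (k + 1), ((V (x + psum (Fin.cons e δ) r) : ℝ) : ℂ)
      = V x + ∑ r ∈ Finset.range k, ((V (x + e + psum δ r) : ℝ) : ℂ) := by
    rw [Finset.sum_range_succ', add_comm]
    simp only [psum_cons, psum_zero, add_zero, ← add_assoc]
  rw [hV, psum_cons, Fin.prod_univ_succ, mul_add, Complex.exp_add, ← add_assoc]
  simp only [Fin.cons_zero, Fin.cons_succ]
  ring

lemma psi_succ (p q : ℂ) (V g : ℤ → ℝ) (k : ℕ) (x : ℤ) :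
    psi p q V g (k + 1) x = Complex.exp (-Complex.I * V x) *
      (p * psi p q V g k (x + 1) + q * psi p q V g k x + p * psi p q V g k (x - 1)) := by
  rw [psi_succ_eq_sum, Finset.sum_insert (by decide), Finset.sum_pair (by decide),
    stepw_neg_one, stepw_zero, stepw_one, add_zero, ← sub_eq_add_neg]
  ring

lemma diffEq_iff (V : ℤ → ℝ) (φ : ℕ → ℤ → ℂ) :
    DiffEq V φ ↔ ∀ k x, φ (k + 1) x = Complex.exp (-Complex.I * V x) *
      (Complex.I / 2 * φ k (x + 1) + (1 - Complex.I) * φ k x + Complex.I / 2 * φ k (x - 1)) := by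
  simp only [DiffEq, one_div, Complex.inv_I]
  refine forall₂_congr fun k x => ?_
  set E := Complex.exp (-Complex.I * V x)
  refine ⟨fun h => ?_, fun h => ?_⟩
  · linear_combination Complex.I * h + (φ (k + 1) x - E * φ k x) * Complex.I_sq
  · linear_combination -Complex.I * h +
      E * (φ k x - φ k (x + 1) / 2 - φ k (x - 1) / 2) * Complex.I_sq

lemma diffEq_psi (V g : ℤ → ℝ) : DiffEq V (psi (Complex.I / 2) (1 - Complex.I) V g) :=
  (diffEq_iff V _).2 fun k x => psi_succ _ _ V g k x

lemma DiffEq.eq_of_zero_eq {V : ℤ → ℝ} {φ φ' : ℕ → ℤ → ℂ} (h : DiffEq V φ) (h' : DiffEq V φ')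
    (h0 : φ 0 = φ' 0) : φ = φ' := by
  rw [diffEq_iff] at h h'
  funext k
  induction k with
  | zero => exact h0
  | succ k ih => funext x; rw [h, h', ih]

lemma eq_of_forall_diffEq_psi {p q : ℂ} (V : ℤ → ℝ) (H : ∀ g, DiffEq V (psi p q V g)) :
    p = Complex.I / 2 ∧ q = 1 - Complex.I := by
  have first_step : ∀ g : ℤ → ℝ, p * g 1 + q * g 0 + p * g (-1)
      = Complex.I / 2 * g 1 + (1 - Complex.I) * g 0 + Complex.I / 2 * g (-1) := fun g => by
    have h := (diffEq_iff V _).1 (H g) 0 0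
    simp only [psi_succ, psi_zero, zero_add, zero_sub] at h
    exact mul_left_cancel₀ (Complex.exp_ne_zero _) h
  constructor
  · simpa using first_step fun y => if y = 1 then 1 else 0
  · simpa using first_step fun y => if y = 0 then 1 else 0

/-- `ψ` solves the difference equation for every `V`, `g` iff `p = i/2` and `q = 1 − i`;
moreover in that case `ψ` is the unique solution with initial condition `ψ(0,x) = g(x)`. -/
theorem psi_solves_diffEq_iff (p q : ℂ) :
    ((∀ V g : ℤ → ℝ, DiffEq V (psi p q V g)) ↔ (p = Complex.I / 2 ∧ q = 1 - Complex.I)) ∧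
    (p = Complex.I / 2 → q = 1 - Complex.I →
      ∀ (V g : ℤ → ℝ) (φ : ℕ → ℤ → ℂ),
        DiffEq V φ → (∀ x : ℤ, φ 0 x = ((g x : ℝ) : ℂ)) → φ = psi p q V g) := by
  refine ⟨⟨fun H => eq_of_forall_diffEq_psi 0 (H 0), ?_⟩, ?_⟩
  · rintro ⟨rfl, rfl⟩
    exact diffEq_psi
  · rintro rfl rfl V g φ hφ h0
    exact hφ.eq_of_zero_eq (diffEq_psi V g) (funext fun x => by rw [h0, psi_zero])
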